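/- Suppose f, g ∈ C(X,ℝ), μ₁ and μ₂ are f-maximizing measures, and ∫ g dμ₁ > ∫ g dμ₂. Let U := {μ ∈ M : ∫ g dμ < ∫ g dμ₁}. Then U is a weak*-open subset of M with U ∩ M_max(f) ≠ ∅, and for every ε > 0 one has U ∩ M_max(f + ε·g) = ∅. -/

import Mathlib

/-! Openness is continuity of `μ ↦ ∫ g dμ` in the weak* topology, and `μ₂` lies in
`U ∩ M_max(f)`. For `μ ∈ U`, the `f`-maximizing `μ₁` does at least as well as `μ` on `f` and
strictly better on `g`, so `∫ (f + ε g) dμ < ∫ (f + ε g) dμ₁ ≤ β(f + ε g)`. -/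

open MeasureTheory Topology Filter
open scoped NNReal

variable {X : Type*} [MetricSpace X] [CompactSpace X] [Nonempty X]
  [MeasurableSpace X] [BorelSpace X]

/-- The set of `T`-invariant Borel probability measures on `X`,
equipped (as a subtype) with the weak* topology. -/
def Minv (T : X → X) : Set (ProbabilityMeasure X) :=
  {μ | (μ : Measure X).map T = (μ : Measure X)}

/-- The integral of a continuous function against a probability measure. -/
noncomputable def intf (f : C(X, ℝ)) (μ : ProbabilityMeasure X) : ℝ :=
  ∫ x, f x ∂(μ : Measure X)

/-- The maximum ergodic average `β(f) = sup {∫ f dμ : μ ∈ M}`. -/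
noncomputable def beta (T : X → X) (f : C(X, ℝ)) : ℝ :=
  sSup (intf f '' Minv T)

/-- The set of `f`-maximizing measures. -/
def MMax (T : X → X) (f : C(X, ℝ)) : Set (ProbabilityMeasure X) :=
  {μ ∈ Minv T | intf f μ = beta T f}

omit [Nonempty X] in
lemma continuous_intf (h : C(X, ℝ)) : Continuous (intf h) :=
  ProbabilityMeasure.continuous_integral_boundedContinuousFunction
    (BoundedContinuousFunction.mkOfCompact h)

omit [Nonempty X] in
lemma abs_intf_le_norm (h : C(X, ℝ)) (μ : ProbabilityMeasure X) :
    |intf h μ| ≤ ‖BoundedContinuousFunction.mkOfCompact h‖ := by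
  simpa [intf, Real.norm_eq_abs] using
    (BoundedContinuousFunction.mkOfCompact h).norm_integral_le_norm (μ : Measure X)

omit [Nonempty X] in
lemma bddAbove_intf_image (h : C(X, ℝ)) (s : Set (ProbabilityMeasure X)) :
    BddAbove (intf h '' s) := by
  refine ⟨‖BoundedContinuousFunction.mkOfCompact h‖, ?_⟩
  rintro _ ⟨μ, -, rfl⟩
  exact (le_abs_self _).trans (abs_intf_le_norm h μ)

omit [Nonempty X] in
lemma intf_le_beta (T : X → X) (h : C(X, ℝ)) {μ : ProbabilityMeasure X}
    (hμ : μ ∈ Minv T) : intf h μ ≤ beta T h :=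
  le_csSup (bddAbove_intf_image h _) ⟨μ, hμ, rfl⟩

omit [Nonempty X] in
lemma intf_add_smul (f g : C(X, ℝ)) (ε : ℝ) (μ : ProbabilityMeasure X) :
    intf (f + ε • g) μ = intf f μ + ε * intf g μ := by
  have hf : Integrable f (μ : Measure X) := (BoundedContinuousFunction.mkOfCompact f).integrable _
  have hg : Integrable g (μ : Measure X) := (BoundedContinuousFunction.mkOfCompact g).integrable _
  simp only [intf, ContinuousMap.add_apply, ContinuousMap.smul_apply, smul_eq_mul]
  rw [integral_add hf (hg.const_mul ε), integral_const_mul]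

omit [Nonempty X] in
lemma notMem_MMax_add_smul_of_intf_lt {T : X → X} {f g : C(X, ℝ)}
    {μ₁ μ : ProbabilityMeasure X} (h₁ : μ₁ ∈ MMax T f) (hμ : μ ∈ Minv T)
    {ε : ℝ} (hε : 0 < ε) (hlt : intf g μ < intf g μ₁) :
    μ ∉ MMax T (f + ε • g) := by
  rintro ⟨-, hμmax⟩
  have hf : intf f μ ≤ intf f μ₁ := h₁.2 ▸ intf_le_beta T f hμ
  have hbeat : intf (f + ε • g) μ < intf (f + ε • g) μ₁ := by
    rw [intf_add_smul, intf_add_smul]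
    exact add_lt_add_of_le_of_lt hf (mul_lt_mul_of_pos_left hlt hε)
  exact hbeat.not_ge (hμmax ▸ intf_le_beta T _ h₁.1)

theorem open_set_meets_MMax_and_avoids_perturbed_general (T : X → X)
    (f g : C(X, ℝ)) (μ₁ μ₂ : ProbabilityMeasure X)
    (h₁ : μ₁ ∈ MMax T f) (h₂ : μ₂ ∈ MMax T f) (hg : intf g μ₂ < intf g μ₁) :
    IsOpen {μ : Minv T | intf g (μ : ProbabilityMeasure X) < intf g μ₁} ∧
    ({μ : Minv T | intf g (μ : ProbabilityMeasure X) < intf g μ₁} ∩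
      {μ : Minv T | (μ : ProbabilityMeasure X) ∈ MMax T f}).Nonempty ∧
    ∀ ε : ℝ, 0 < ε →
      {μ : Minv T | intf g (μ : ProbabilityMeasure X) < intf g μ₁} ∩
        {μ : Minv T | (μ : ProbabilityMeasure X) ∈ MMax T (f + ε • g)} = ∅ := by
  refine ⟨?_, ⟨⟨μ₂, h₂.1⟩, hg, h₂⟩, fun ε hε => ?_⟩
  · exact isOpen_lt ((continuous_intf g).comp continuous_subtype_val) continuous_const
  · exact Set.eq_empty_of_forall_notMem fun μ ⟨hlt, hmax⟩ =>
      notMem_MMax_add_smul_of_intf_lt h₁ μ.2 hε hlt hmax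

/-- If `μ₁, μ₂ ∈ M_max(f)` with `∫ g dμ₁ > ∫ g dμ₂`, then
`U = {μ ∈ M : ∫ g dμ < ∫ g dμ₁}` is weak*-open in `M`, meets `M_max(f)`,
and is disjoint from `M_max(f + ε g)` for every `ε > 0`. -/
theorem open_set_meets_MMax_and_avoids_perturbed (T : X → X) (hT : Continuous T)
    (hM : (Minv T).Nonempty) (f g : C(X, ℝ)) (μ₁ μ₂ : ProbabilityMeasure X)
    (h₁ : μ₁ ∈ MMax T f) (h₂ : μ₂ ∈ MMax T f) (hg : intf g μ₂ < intf g μ₁) :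
    IsOpen {μ : Minv T | intf g (μ : ProbabilityMeasure X) < intf g μ₁} ∧
    ({μ : Minv T | intf g (μ : ProbabilityMeasure X) < intf g μ₁} ∩
      {μ : Minv T | (μ : ProbabilityMeasure X) ∈ MMax T f}).Nonempty ∧
    ∀ ε : ℝ, 0 < ε →
      {μ : Minv T | intf g (μ : ProbabilityMeasure X) < intf g μ₁} ∩
        {μ : Minv T | (μ : ProbabilityMeasure X) ∈ MMax T (f + ε • g)} = ∅ :=
  open_set_meets_MMax_and_avoids_perturbed_general T f g μ₁ μ₂ h₁ h₂ hg
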